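/- Let n = p_1 p_2 > 4 with p_1, p_2 ≥ 2, and let G be a nontrivial graph on n vertices with minimum degree d < p_1 + p_2 − 2 (for the factor ordering p_1 ≤ p_2, with p_2 > 2). Then there exists a vertex labeling of G by {1,…,p_1}×{1,…,p_2} under which some vertex has strictly larger degree in G^{pT} than in G, hence the normalized Laplacian of G is entangled in C^{p_1} × C^{p_2} for that labeling. -/

import Mathlib

open Matrix Finset
open scoped Kronecker Classical ComplexOrder

/-- The partial transpose graph: {(u,v),(w,y)} is an edge iff {(u,y),(w,v)} is an
edge of the original graph. -/
def partialTranspose {α β : Type*} (G : SimpleGraph (α × β)) : SimpleGraph (α × β) where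
  Adj x y := G.Adj (x.1, y.2) (y.1, x.2)
  symm := ⟨fun x y h => G.symm.symm _ _ h⟩
  loopless := ⟨fun x h => G.loopless.irrefl (x.1, x.2) h⟩

/-- The degree of a vertex: the number of neighbors. -/
noncomputable def natDeg {γ : Type*} [Fintype γ] (G : SimpleGraph γ) (x : γ) : ℕ :=
  (Finset.univ.filter fun y => G.Adj x y).card

/-!
Label a vertex `w` of minimum degree `d` as `(a, b)`, put all its neighbours on the cross
`{a} × β ∪ α × {b}`, and send the endpoints of an edge `uv` avoiding `w` to `(a, b')` and
`(a', b)`. A neighbour of `(a, b)` on the cross stays a neighbour in the partial transpose,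
and the edge `uv` becomes the additional partial-transpose edge from `(a, b)` to `(a', b')`.
The cross has `p₁ + p₂ - 1` cells; this suffices because either `d ≤ 1`, or `u` can be
taken among the neighbours of `w`, so that at most `d - 1` neighbours remain to be placed.
-/
lemma partialTranspose_adj_of_adj {α β : Type*} {H : SimpleGraph (α × β)} {x z : α × β}
    (hxz : H.Adj x z) (hz : z.1 = x.1 ∨ z.2 = x.2) : (partialTranspose H).Adj x z := by
  obtain ⟨x₁, x₂⟩ := x
  obtain ⟨z₁, z₂⟩ := z
  rcases hz with rfl | rfl
  exacts [hxz.symm, hxz]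

lemma natDeg_lt_natDeg_partialTranspose {α β : Type*} [Fintype α] [Fintype β]
    (H : SimpleGraph (α × β)) {x y : α × β}
    (hcross : ∀ z, H.Adj x z → z.1 = x.1 ∨ z.2 = x.2)
    (hy : (partialTranspose H).Adj x y) (hy₁ : y.1 ≠ x.1) (hy₂ : y.2 ≠ x.2) :
    natDeg H x < natDeg (partialTranspose H) x := by
  refine card_lt_card ((ssubset_iff_of_subset fun z hz => ?_).2 ⟨y, ?_, ?_⟩)
  · simp only [mem_filter, mem_univ, true_and] at hz ⊢
    exact partialTranspose_adj_of_adj hz (hcross z hz)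
  · simpa using hy
  · simpa using fun h => (hcross y h).elim hy₁ hy₂

lemma exists_equiv_eqOn_mapsTo {V W : Type*} [Fintype V] [Fintype W]
    (hVW : Fintype.card V = Fintype.card W) {s₁ s₂ : Finset V} (hs : Disjoint s₁ s₂)
    {g : V → W} (hg : Set.InjOn g s₁) {t : Finset W} (ht : Disjoint (s₁.image g) t)
    (hst : #s₂ ≤ #t) : ∃ f : V ≃ W, Set.EqOn f g s₁ ∧ Set.MapsTo f s₂ t := by
  obtain ⟨e⟩ : Nonempty (s₂ ↪ t) := Function.Embedding.nonempty_of_card_le (by simpa)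
  let h : V → W := fun x => if hx : x ∈ s₂ then e ⟨x, hx⟩ else g x
  have hg_eq : Set.EqOn h g s₁ := fun x hx => dif_neg (disjoint_left.1 hs hx)
  have hmaps : Set.MapsTo h s₂ t := fun x hx => by simp [h, mem_coe.1 hx]
  have hinj : Set.InjOn h ↑(s₁ ∪ s₂) := by
    rw [coe_union, Set.injOn_union (disjoint_coe.2 hs)]
    refine ⟨hg.congr hg_eq.symm, fun x hx y hy hxy => ?_, fun x hx y hy hxy => ?_⟩
    · simpa [h, mem_coe.1 hx, mem_coe.1 hy] using hxy
    · rw [hg_eq hx] at hxy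
      exact disjoint_left.1 ht (mem_image_of_mem g hx) (hxy ▸ hmaps hy)
  obtain ⟨f, hf⟩ := Finset.exists_equiv_extend_of_card_eq (t := univ) (by simpa) (by simp) hinj
  refine ⟨f.trans (Equiv.subtypeUnivEquiv mem_univ), fun x hx => ?_, fun x hx => ?_⟩
  · simpa [hg_eq hx] using hf x (mem_union_left _ hx)
  · simpa [hf x (mem_union_right _ hx)] using hmaps hx

lemma exists_equiv_mapsTo_cross {V α β : Type*} [Fintype V] [DecidableEq V] [Fintype α]
    [Fintype β]
    (hV : Fintype.card V = Fintype.card α * Fintype.card β) {w u v : V}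
    (huw : u ≠ w) (hvw : v ≠ w) (huv : u ≠ v) {N : Finset V} (hwN : w ∉ N)
    (hN : #(N \ {u, v}) + 4 ≤ Fintype.card α + Fintype.card β)
    {a a' : α} {b b' : β} (ha : a ≠ a') (hb : b ≠ b') :
    ∃ f : V ≃ α × β, f w = (a, b) ∧ f u = (a, b') ∧ f v = (a', b) ∧
      ∀ t ∈ N, (f t).1 = a ∨ (f t).2 = b := by
  let g : V → α × β := fun x => if x = w then (a, b) else if x = u then (a, b') else (a', b)
  -- the cross through `(a, b)` minus the three points `g` prescribes
  let arms : Finset (α × β) := {a} ×ˢ {b, b'}ᶜ ∪ {a, a'}ᶜ ×ˢ {b}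
  have harms : #arms = (Fintype.card β - 2) + (Fintype.card α - 2) := by
    rw [card_union_of_disjoint (disjoint_left.2 fun p h₁ h₂ => ?_), card_product, card_product,
      card_compl, card_compl, card_pair ha, card_pair hb, card_singleton, card_singleton]
    · ring
    · simp only [mem_product, mem_singleton, mem_compl, mem_insert] at h₁ h₂
      exact h₂.1 (.inl h₁.1)
  have hα : 2 ≤ Fintype.card α := by simpa [card_pair ha] using card_le_univ {a, a'}
  have hβ : 2 ≤ Fintype.card β := by simpa [card_pair hb] using card_le_univ {b, b'}
  obtain ⟨f, hfg, hfN⟩ := exists_equiv_eqOn_mapsTo (s₁ := {w, u, v}) (s₂ := N \ {u, v})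
    (g := g) (t := arms) (by simpa using hV) (by simp [disjoint_left, hwN])
    (by simp [Set.InjOn, g, huw, hvw, huv, huw.symm, hvw.symm, huv.symm, ha, hb, ha.symm, hb.symm])
    (by simp [g, huw, hvw, huv.symm, ha, hb, arms, disjoint_left])
    (by omega)
  have hfw : f w = (a, b) := by simpa [g] using hfg (by simp : w ∈ _)
  have hfu : f u = (a, b') := by simpa [g, huw] using hfg (by simp : u ∈ _)
  have hfv : f v = (a', b) := by simpa [g, hvw, huv.symm] using hfg (by simp : v ∈ _)
  refine ⟨f, hfw, hfu, hfv, fun t ht => ?_⟩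
  by_cases htu : t = u
  · simp [htu, hfu]
  by_cases htv : t = v
  · simp [htv, hfv]
  have := hfN (by simp [ht, htu, htv] : t ∈ N \ {u, v})
  simp only [arms, coe_union, Set.mem_union, mem_coe, mem_product, mem_singleton] at this
  tauto

lemma exists_adj_ne_ne_of_natDeg_le {V : Type*} [Fintype V] {G : SimpleGraph V} (hG : G ≠ ⊥)
    {w : V} (hw : ∀ x, natDeg G w ≤ natDeg G x) (hV : natDeg G w + 1 < Fintype.card V) :
    ∃ u v, G.Adj u v ∧ u ≠ w ∧ v ≠ w := by
  obtain ⟨a, b, hab⟩ := SimpleGraph.ne_bot_iff_exists_adj.1 hG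
  by_cases haw : a ≠ w ∧ b ≠ w
  · exact ⟨a, b, hab, haw⟩
  have hw_pos : 0 < natDeg G w := card_pos.2 <| by
    rw [not_and_or, not_ne_iff, not_ne_iff] at haw
    rcases haw with rfl | rfl
    exacts [⟨b, by simpa using hab⟩, ⟨a, by simpa using hab.symm⟩]
  obtain ⟨z, -, hz⟩ := exists_mem_notMem_of_card_lt_card
    (s := insert w (univ.filter (G.Adj w))) (t := univ)
    (by simpa using (card_insert_le w _).trans_lt hV)
  obtain ⟨y, hy⟩ := card_pos.1 (hw_pos.trans_le (hw z))
  simp only [mem_insert, mem_filter, mem_univ, true_and, not_or] at hz hy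
  exact ⟨z, y, hy, hz.1, by rintro rfl; exact hz.2 hy.symm⟩

lemma exists_adj_ne_ne_card_sdiff_lt {V : Type*} [Fintype V] [DecidableEq V]
    {G : SimpleGraph V} (hG : G ≠ ⊥) {w : V} (hw : ∀ x, natDeg G w ≤ natDeg G x)
    (hV : natDeg G w + 1 < Fintype.card V) :
    ∃ u v, G.Adj u v ∧ u ≠ w ∧ v ≠ w ∧
      #((univ.filter fun y => G.Adj w y) \ {u, v}) < max (natDeg G w) 2 := by
  set N := univ.filter fun y => G.Adj w y
  have hN : #N = natDeg G w := rfl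
  by_cases hd : natDeg G w ≤ 1
  · obtain ⟨u, v, huv, huw, hvw⟩ := exists_adj_ne_ne_of_natDeg_le hG hw hV
    have := card_le_card (sdiff_subset (s := N) (t := {u, v}))
    exact ⟨u, v, huv, huw, hvw, by omega⟩
  obtain ⟨u, hu⟩ := card_pos.1 (by omega : 0 < #N)
  obtain ⟨v, hv, hvw⟩ := exists_mem_ne ((not_le.1 hd).trans_le (hw u)) w
  have := card_le_card (sdiff_subset_sdiff (subset_refl N)
    (singleton_subset_iff.2 (mem_insert_self u {v})))
  rw [← erase_eq, card_erase_of_mem hu] at this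
  simp only [N, mem_filter, mem_univ, true_and] at hu hv
  exact ⟨u, v, hv, hu.ne', hvw, by omega⟩

theorem stmt_17_general (p₁ p₂ : ℕ) (hp₁ : 2 ≤ p₁) (hp₂ : 2 < p₂)
    (G : SimpleGraph (Fin (p₁ * p₂))) (hnt : G ≠ ⊥)
    (hmin : ∃ w, (∀ x, natDeg G w ≤ natDeg G x) ∧ natDeg G w + 2 < p₁ + p₂) :
    ∃ f : Fin (p₁ * p₂) ≃ Fin p₁ × Fin p₂,
      ∃ x, natDeg (G.map f.toEmbedding) x <
        natDeg (partialTranspose (G.map f.toEmbedding)) x := by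
  obtain ⟨w, hw, hwd⟩ := hmin
  obtain ⟨u, v, huv, huw, hvw, hN⟩ := exists_adj_ne_ne_card_sdiff_lt hnt hw
    (by rw [Fintype.card_fin]; nlinarith)
  let i₀ : Fin p₁ := ⟨0, by omega⟩
  let i₁ : Fin p₁ := ⟨1, by omega⟩
  let j₀ : Fin p₂ := ⟨0, by omega⟩
  let j₁ : Fin p₂ := ⟨1, by omega⟩
  obtain ⟨f, hfw, hfu, hfv, hfN⟩ := exists_equiv_mapsTo_cross
    (N := univ.filter fun y => G.Adj w y) (a := i₀) (a' := i₁) (b := j₀) (b' := j₁) (by simp)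
    huw hvw huv.ne (by simp) (by simp only [Fintype.card_fin]; omega) (by simp [i₀, i₁])
    (by simp [j₀, j₁])
  refine ⟨f, f w, natDeg_lt_natDeg_partialTranspose _ (y := (i₁, j₁)) (fun z hz => ?_) ?_
    (by simp [hfw, i₀, i₁]) (by simp [hfw, j₀, j₁])⟩
  · rw [hfw, ← f.apply_symm_apply z]
    rw [← f.apply_symm_apply z] at hz
    exact hfN _ (by simpa using SimpleGraph.map_adj_apply.1 hz)
  · change (G.map f.toEmbedding).Adj ((f w).1, j₁) (i₁, (f w).2)
    rw [hfw, ← hfu, ← hfv]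
    exact SimpleGraph.map_adj_apply.2 huv

/-- for n = p₁p₂ > 4 with 2 ≤ p₁ ≤ p₂, p₂ > 2, and G a nontrivial
graph on n vertices whose minimum degree d satisfies d < p₁ + p₂ − 2 (i.e. some
vertex w of minimum degree has degree d with d + 2 < p₁ + p₂), there is a vertex
labeling under which some vertex has strictly larger degree in the partial
transpose graph than in G (hence the normalized Laplacian is entangled in
ℂ^{p₁} × ℂ^{p₂} for that labeling). -/
theorem stmt_17 (p₁ p₂ : ℕ) (hp₁ : 2 ≤ p₁) (hp₁₂ : p₁ ≤ p₂) (hp₂ : 2 < p₂)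
    (hn : 4 < p₁ * p₂)
    (G : SimpleGraph (Fin (p₁ * p₂))) (hnt : G ≠ ⊥)
    (hmin : ∃ w, (∀ x, natDeg G w ≤ natDeg G x) ∧ natDeg G w + 2 < p₁ + p₂) :
    ∃ f : Fin (p₁ * p₂) ≃ Fin p₁ × Fin p₂,
      ∃ x, natDeg (G.map f.toEmbedding) x <
        natDeg (partialTranspose (G.map f.toEmbedding)) x :=
  stmt_17_general p₁ p₂ hp₁ hp₂ G hnt hmin
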